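/- Let K be a simplicial complex, σ a face of K, and m ≥ dim σ + 1. Then link(σ; K^[m]) = (link(σ; K))^[m - dim σ - 1], where L^[ℓ] denotes the pure ℓ-skeleton of L, i.e., the subcomplex generated by all ℓ-dimensional faces of L. -/

import Mathlib

noncomputable section

/-! ## Singular homology machinery -/

open NNReal in
/-- The topological simplex associated to `x : SimplexCategory` (as in the older Mathlib). -/
def SimplexCategory.toTopObj (x : SimplexCategory) := { f : Fin (x.len + 1) → ℝ≥0 | ∑ i, f i = 1 }

/-- A morphism in `SimplexCategory` induces a map on the associated topological spaces. -/
def SimplexCategory.toTopMap {x y : SimplexCategory} (f : x ⟶ y) (g : x.toTopObj) : y.toTopObj :=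
  ⟨fun i => ∑ j ∈ Finset.univ.filter (f.toOrderHom · = i), g.1 j, by
    simp only [SimplexCategory.toTopObj, Set.mem_ofPred]
    rw [← Finset.sum_biUnion]
    · have hg : ∑ i : Fin (x.len + 1), g.1 i = 1 := g.2
      convert hg
      simp [Finset.eq_univ_iff_forall]
    · convert Set.pairwiseDisjoint_filter _ _ _⟩

theorem SimplexCategory.continuous_toTopMap {x y : SimplexCategory} (f : x ⟶ y) :
    Continuous (SimplexCategory.toTopMap f) := by
  refine Continuous.subtype_mk (continuous_pi fun i => ?_) _
  exact continuous_finsetSum _ (fun j _ => (continuous_apply _).comp continuous_subtype_val)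

/-- The topological standard `n`-simplex. -/
abbrev TopSimplex (n : ℕ) : Type := (SimplexCategory.mk n).toTopObj

/-- The `i`-th face inclusion of topological simplices, as a continuous map. -/
def faceIncl {n : ℕ} (i : Fin (n + 2)) : C(TopSimplex n, TopSimplex (n + 1)) :=
  ⟨SimplexCategory.toTopMap (SimplexCategory.δ i), SimplexCategory.continuous_toTopMap _⟩

/-- Singular `n`-chains of `X` with coefficients in `k`:
the free `k`-module on continuous maps from the standard `n`-simplex. -/
abbrev SChain (k : Type) [Field k] (X : Type*) [TopologicalSpace X] (n : ℕ) :=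
  C(TopSimplex n, X) →₀ k

variable (k : Type) [Field k]

/-- The singular boundary map `C_{n+1}(X) → C_n(X)`. -/
def sBoundary (X : Type*) [TopologicalSpace X] (n : ℕ) :
    SChain k X (n + 1) →ₗ[k] SChain k X n :=
  Finsupp.lsum k fun σ => ∑ i : Fin (n + 2),
    ((-1 : k) ^ (i : ℕ)) • Finsupp.lsingle (σ.comp (faceIncl i))

/-- The chain map induced by a continuous map. -/
def chainMap {A X : Type*} [TopologicalSpace A] [TopologicalSpace X] (f : C(A, X)) (n : ℕ) :
    SChain k A n →ₗ[k] SChain k X n :=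
  Finsupp.lmapDomain k k fun σ => f.comp σ

lemma chainMap_comm {A X : Type*} [TopologicalSpace A] [TopologicalSpace X] (f : C(A, X))
    (n : ℕ) :
    (sBoundary k X n).comp (chainMap k f (n + 1)) = (chainMap k f n).comp (sBoundary k A n) := by
  apply Finsupp.lhom_ext
  intro σ b
  simp only [LinearMap.coe_comp, Function.comp_apply, chainMap, Finsupp.lmapDomain_apply,
    Finsupp.mapDomain_single, sBoundary, Finsupp.lsum_single, LinearMap.coe_sum,
    Finset.sum_apply, LinearMap.smul_apply, Finsupp.lsingle_apply, map_sum,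
    Finsupp.mapDomain_smul, ContinuousMap.comp_assoc]

/-- Chains of `X` supported on a subspace `A ⊆ X`
(the image of the chains of `A` under the inclusion). -/
def subChains (X : Type*) [TopologicalSpace X] (A : Set X) (n : ℕ) :
    Submodule k (SChain k X n) :=
  LinearMap.range (chainMap k ⟨(Subtype.val : A → X), continuous_subtype_val⟩ n)

/-- Relative singular `n`-chains of the pair `(X, A)`. -/
abbrev RelChain (X : Type*) [TopologicalSpace X] (A : Set X) (n : ℕ) :=
  SChain k X n ⧸ subChains k X A n

lemma subChains_le (X : Type*) [TopologicalSpace X] (A : Set X) (n : ℕ) :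
    subChains k X A (n + 1) ≤ (subChains k X A n).comap (sBoundary k X n) := by
  rintro x ⟨y, rfl⟩
  exact ⟨sBoundary k A n y, (LinearMap.congr_fun (chainMap_comm k _ n) y).symm⟩

/-- The boundary map on relative singular chains. -/
def relBoundary (X : Type*) [TopologicalSpace X] (A : Set X) (n : ℕ) :
    RelChain k X A (n + 1) →ₗ[k] RelChain k X A n :=
  Submodule.mapQ _ _ (sBoundary k X n) (subChains_le k X A n)

/-- Relative singular cycles. -/
def relCycles (X : Type*) [TopologicalSpace X] (A : Set X) :
    (n : ℕ) → Submodule k (RelChain k X A n)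
  | 0 => ⊤
  | n + 1 => LinearMap.ker (relBoundary k X A n)

/-- Relative singular homology `H_n(X, A; k)`: cycles modulo boundaries. -/
def RelHomology (X : Type*) [TopologicalSpace X] (A : Set X) (n : ℕ) : Type _ :=
  ↥((relCycles k X A n).map (LinearMap.range (relBoundary k X A n)).mkQ)

/-- Local homology `H_n(X, X - p; k)`. -/
def LocalHomology (X : Type*) [TopologicalSpace X] (p : X) (n : ℕ) : Type _ :=
  RelHomology k X ({p}ᶜ) n

/-- Local homology with integer index (trivial in negative degrees). -/
def LocalHomologyZ (X : Type*) [TopologicalSpace X] (p : X) : ℤ → Type _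
  | .ofNat n => LocalHomology k X p n
  | .negSucc _ => PUnit

instance (X : Type*) [TopologicalSpace X] (p : X) (n : ℕ) :
    AddCommGroup (LocalHomology k X p n) := by
  unfold LocalHomology RelHomology; infer_instance

instance (X : Type*) [TopologicalSpace X] (p : X) (n : ℕ) :
    Module k (LocalHomology k X p n) := by
  unfold LocalHomology RelHomology; infer_instance

instance (X : Type*) [TopologicalSpace X] (p : X) (j : ℤ) :
    AddCommGroup (LocalHomologyZ k X p j) := by
  unfold LocalHomologyZ; cases j <;> infer_instance

instance (X : Type*) [TopologicalSpace X] (p : X) (j : ℤ) :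
    Module k (LocalHomologyZ k X p j) := by
  unfold LocalHomologyZ; cases j <;> infer_instance

/-- The augmentation map on singular `0`-chains. -/
def sAugment (X : Type*) [TopologicalSpace X] : SChain k X 0 →ₗ[k] k :=
  Finsupp.lsum k fun _ => LinearMap.id

/-- Reduced singular cycles (using the augmented chain complex). -/
def redCycles (X : Type*) [TopologicalSpace X] : (n : ℕ) → Submodule k (SChain k X n)
  | 0 => LinearMap.ker (sAugment k X)
  | n + 1 => LinearMap.ker (sBoundary k X n)

/-- Reduced singular homology `H̃_n(X; k)`. -/
def RedHomology (X : Type*) [TopologicalSpace X] (n : ℕ) : Type _ :=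
  ↥((redCycles k X n).map (LinearMap.range (sBoundary k X n)).mkQ)

/-! ## Abstract simplicial complexes and their geometric realization -/

/-- A (possibly empty) abstract simplicial complex on the vertex set `V`,
whose faces include the empty set whenever there is any face. -/
structure ASC (V : Type) where
  faces : Set (Finset V)
  down_closed : ∀ {s t : Finset V}, s ∈ faces → t ⊆ s → t ∈ faces

/-- The dimension of a face: its cardinality minus one. -/
def dimF {V : Type} (s : Finset V) : ℤ := (s.card : ℤ) - 1

namespace ASC

variable {V : Type}

/-- The link of a face `σ`. -/
def link [DecidableEq V] (K : ASC V) (σ : Finset V) : ASC V where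
  faces := {τ | τ ∩ σ = ∅ ∧ τ ∪ σ ∈ K.faces}
  down_closed := by
    rintro s t ⟨hd, hu⟩ hts
    refine ⟨Finset.subset_empty.mp ?_, K.down_closed hu (Finset.union_subset_union hts Finset.Subset.rfl)⟩
    rw [← hd]
    exact Finset.inter_subset_inter hts Finset.Subset.rfl

/-- A facet: an inclusion-maximal face. -/
def IsFacet (K : ASC V) (s : Finset V) : Prop :=
  s ∈ K.faces ∧ ∀ t ∈ K.faces, s ⊆ t → s = t

/-- The subcomplex of `K` generated by a given family of faces of `K`. -/
def gen (K : ASC V) (F : Set (Finset V)) : ASC V where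
  faces := {t | ∃ s ∈ F ∩ K.faces, t ⊆ s}
  down_closed := by rintro s t ⟨u, hu, hsu⟩ hts; exact ⟨u, hu, hts.trans hsu⟩

/-- `K^⟨m⟩`: the subcomplex generated by all facets of dimension at least `m`. -/
def aboveSkel (K : ASC V) (m : ℤ) : ASC V :=
  K.gen {s | K.IsFacet s ∧ m ≤ dimF s}

/-- `K^[m]`: the pure `m`-skeleton, generated by all `m`-dimensional faces. -/
def pureSkel (K : ASC V) (m : ℤ) : ASC V :=
  K.gen {s | dimF s = m}

/-- The `m`-skeleton: all faces of dimension at most `m`. -/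
def skel (K : ASC V) (m : ℤ) : ASC V where
  faces := {s | s ∈ K.faces ∧ dimF s ≤ m}
  down_closed := by
    rintro s t ⟨hs, hds⟩ hts
    refine ⟨K.down_closed hs hts, le_trans ?_ hds⟩
    simp only [dimF, sub_le_sub_iff_right, Nat.cast_le]
    exact Finset.card_le_card hts

/-- `K` has dimension `n`. -/
def hasDim (K : ASC V) (n : ℤ) : Prop :=
  (∃ s ∈ K.faces, dimF s = n) ∧ ∀ s ∈ K.faces, dimF s ≤ n

/-- The geometric realization of `K`, as a subset of `V → ℝ`. -/
def realizSet (K : ASC V) [Fintype V] : Set (V → ℝ) :=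
  {f | (∀ v, 0 ≤ f v) ∧ (∑ v, f v) = 1 ∧ ∃ s ∈ K.faces, ∀ v, f v ≠ 0 → v ∈ s}

/-- The geometric realization of `K`, as a topological space. -/
abbrev space (K : ASC V) [Fintype V] : Type _ := ↥(K.realizSet)

/-- The set of points of `|K|` lying in the realization of a subcomplex `L`. -/
def subSpace (K : ASC V) [Fintype V] (L : ASC V) : Set K.space :=
  {p | ∃ s ∈ L.faces, ∀ v, (p : V → ℝ) v ≠ 0 → v ∈ s}

/-- `p` lies in the (relative) interior of the face `σ`, i.e. the support of `p` is
exactly `σ`. -/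
def inInterior (K : ASC V) [Fintype V] (σ : Finset V) (p : K.space) : Prop :=
  ∀ v, (p : V → ℝ) v ≠ 0 ↔ v ∈ σ

end ASC

/-! ## Simplicial homology -/

/-- The `n`-dimensional faces of `K` (faces of cardinality `n+1`). -/
def FacesDim {V : Type} (K : ASC V) (n : ℕ) : Type _ :=
  {s : Finset V // s ∈ K.faces ∧ s.card = n + 1}

/-- Simplicial `n`-chains. -/
abbrev SimpChain {V : Type} (K : ASC V) (n : ℕ) : Type _ := FacesDim K n →₀ k

/-- The `i`-th vertex of a face of cardinality `n` (in the vertex order). -/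
def faceVertex {V : Type} [LinearOrder V] {n : ℕ} (s : Finset V) (hs : s.card = n)
    (i : Fin n) : V :=
  (s.sort (· ≤ ·))[(i : ℕ)]'(by rw [Finset.length_sort, hs]; exact i.isLt)

lemma faceVertex_mem {V : Type} [LinearOrder V] {n : ℕ} (s : Finset V) (hs : s.card = n)
    (i : Fin n) : faceVertex s hs i ∈ s :=
  (Finset.mem_sort _).mp (List.getElem_mem _)

/-- The simplicial boundary map. -/
def simpBoundary {V : Type} [LinearOrder V] (K : ASC V) (n : ℕ) :
    SimpChain k K (n + 1) →ₗ[k] SimpChain k K n :=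
  Finsupp.lsum k fun s => ∑ i : Fin (n + 2),
    ((-1 : k) ^ (i : ℕ)) • Finsupp.lsingle
      ⟨s.1.erase (faceVertex s.1 s.2.2 i),
        K.down_closed s.2.1 (Finset.erase_subset _ _), by
          rw [Finset.card_erase_of_mem (faceVertex_mem s.1 s.2.2 i), s.2.2]; omega⟩

/-- The simplicial augmentation map. -/
def simpAugment {V : Type} (K : ASC V) : SimpChain k K 0 →ₗ[k] k :=
  Finsupp.lsum k fun _ => LinearMap.id

/-- Reduced simplicial cycles (augmented chain complex). -/
def simpRedCycles {V : Type} [LinearOrder V] (K : ASC V) :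
    (n : ℕ) → Submodule k (SimpChain k K n)
  | 0 => (LinearMap.ker (simpAugment k K) : Submodule k (SimpChain k K 0))
  | n + 1 => LinearMap.ker (simpBoundary k K n)

/-- Reduced simplicial homology `H̃_n(K; k)` in degree `n : ℕ`. -/
def SimpRedHomology {V : Type} [LinearOrder V] (K : ASC V) (n : ℕ) : Type _ :=
  ↥((simpRedCycles k K n).map (LinearMap.range (simpBoundary k K n)).mkQ)

instance {V : Type} [LinearOrder V] (K : ASC V) (n : ℕ) :
    AddCommGroup (SimpRedHomology k K n) := by unfold SimpRedHomology; infer_instance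

instance {V : Type} [LinearOrder V] (K : ASC V) (n : ℕ) :
    Module k (SimpRedHomology k K n) := by unfold SimpRedHomology; infer_instance

/-- The cokernel of the simplicial augmentation: reduced homology in degree `-1`. -/
def augCoker {V : Type} (K : ASC V) : Type _ :=
  k ⧸ LinearMap.range (simpAugment k K)

instance {V : Type} (K : ASC V) : AddCommGroup (augCoker k K) := by
  unfold augCoker; infer_instance

instance {V : Type} (K : ASC V) : Module k (augCoker k K) := by
  unfold augCoker; infer_instance

/-- Reduced simplicial homology with integer index: in degree `-1` it is the cokernel of the
augmentation, and it is trivial in degrees below `-1`. -/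
def SimpRedHomologyZ {V : Type} [LinearOrder V] (K : ASC V) : ℤ → Type _
  | .ofNat n => SimpRedHomology k K n
  | .negSucc 0 => augCoker k K
  | .negSucc (_ + 1) => PUnit

instance {V : Type} [LinearOrder V] (K : ASC V) (j : ℤ) :
    AddCommGroup (SimpRedHomologyZ k K j) := by
  unfold SimpRedHomologyZ
  match j with
  | .ofNat n => infer_instance
  | .negSucc 0 => infer_instance
  | .negSucc (_ + 1) => infer_instance

instance {V : Type} [LinearOrder V] (K : ASC V) (j : ℤ) :
    Module k (SimpRedHomologyZ k K j) := by
  unfold SimpRedHomologyZ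
  match j with
  | .ofNat n => infer_instance
  | .negSucc 0 => infer_instance
  | .negSucc (_ + 1) => infer_instance

/-! ## Serre conditions -/

/-- Serre's condition `(S_r)` over `k` for a `(d-1)`-dimensional complex `K`. -/
def IsSerre {V : Type} [LinearOrder V] (K : ASC V) (d r : ℕ) : Prop :=
  ∀ σ ∈ K.faces, ∀ i : ℕ,
    (i : ℤ) < min ((r : ℤ) - 1) ((d : ℤ) - dimF σ - 2) →
      Subsingleton (SimpRedHomology k (K.link σ) i)

/-- Sequentially `(S_r)`: every pure `m`-skeleton (an `m`-dimensional complex) is `(S_r)`. -/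
def SeqSerre {V : Type} [LinearOrder V] (K : ASC V) (r : ℕ) : Prop :=
  ∀ m : ℕ, IsSerre k (K.pureSkel (m : ℤ)) (m + 1) r

/-! ## Topological notions -/

/-- The open unit ball in `ℝ^n`. -/
def openBall (n : ℕ) : Set (EuclideanSpace ℝ (Fin n)) := Metric.ball 0 1

/-- `p` has a neighborhood homeomorphic to an open `j`-dimensional ball. -/
def HasBallNbhd {X : Type*} [TopologicalSpace X] (p : X) (j : ℕ) : Prop :=
  ∃ U ∈ nhds p, Nonempty (↥U ≃ₜ ↥(openBall j))

/-- `D_j(X; k)`: the points with nonvanishing `j`-th local homology. -/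
def Dset (X : Type*) [TopologicalSpace X] (j : ℕ) : Set X :=
  {p | Nontrivial (LocalHomology k X p j)}

/-- `X^⟨m⟩`: the closure of the union of the `D_j(X; k)` for `j ≥ m`. -/
def aboveSet (X : Type*) [TopologicalSpace X] (m : ℕ) : Set X :=
  closure (⋃ j : ℕ, ⋃ _ : m ≤ j, Dset k X j)

/-- The dimension of a subset `S` of a space is at most `ℓ`: `S` contains no open ball of
dimension greater than `ℓ`.  (The empty set has negative dimension.) -/
def SetDimLE {X : Type*} [TopologicalSpace X] (S : Set X) (ℓ : ℤ) : Prop :=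
  ∀ n : ℕ, (∃ B : Set X, B ⊆ S ∧ Nonempty (↥B ≃ₜ ↥(openBall n))) → (n : ℤ) ≤ ℓ

/-! The link of `σ` in the subcomplex generated by a family `F` is generated by the sets
`s \ σ` with `σ ⊆ s ∈ F`, and removing `σ` from a face containing it lowers the dimension by
exactly `dim σ + 1`. -/

namespace ASC

variable {V : Type}

@[ext]
lemma ext {K L : ASC V} (h : K.faces = L.faces) : K = L := by
  cases K; cases L; subst h; rfl

lemma gen_congr (K : ASC V) {F G : Set (Finset V)} (hFG : ∀ s ∈ K.faces, s ∈ F ↔ s ∈ G) :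
    K.gen F = K.gen G := by
  ext t
  simp only [gen, Set.mem_ofPred_eq, Set.mem_inter_iff]
  constructor
  · rintro ⟨s, ⟨hsF, hsK⟩, hts⟩
    exact ⟨s, ⟨(hFG s hsK).1 hsF, hsK⟩, hts⟩
  · rintro ⟨s, ⟨hsG, hsK⟩, hts⟩
    exact ⟨s, ⟨(hFG s hsK).2 hsG, hsK⟩, hts⟩

lemma link_gen [DecidableEq V] (K : ASC V) (F : Set (Finset V)) (σ : Finset V) :
    (K.gen F).link σ = (K.link σ).gen {t | Disjoint t σ ∧ t ∪ σ ∈ F} := by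
  ext τ
  simp only [link, gen, Set.mem_ofPred_eq, Set.mem_inter_iff,
    ← Finset.disjoint_iff_inter_eq_empty]
  constructor
  · rintro ⟨hτσ, s, ⟨hsF, hsK⟩, hτσs⟩
    obtain ⟨hτs, hσs⟩ := Finset.union_subset_iff.mp hτσs
    rw [← Finset.sdiff_union_of_subset hσs] at hsF hsK
    exact ⟨s \ σ, ⟨⟨Finset.sdiff_disjoint, hsF⟩, Finset.sdiff_disjoint, hsK⟩,
      Finset.subset_sdiff.mpr ⟨hτs, hτσ⟩⟩
  · rintro ⟨t, ⟨⟨htσ, htF⟩, -, htK⟩, hτt⟩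
    exact ⟨htσ.mono_left hτt, t ∪ σ, ⟨htF, htK⟩, Finset.union_subset_union_left hτt⟩

end ASC

lemma dimF_union_of_disjoint {V : Type} [DecidableEq V] {s t : Finset V} (h : Disjoint s t) :
    dimF (s ∪ t) = dimF s + dimF t + 1 := by
  simp only [dimF, Finset.card_union_of_disjoint h]
  push_cast
  ring

theorem serre_stmt_11_general (V : Type) [DecidableEq V] (K : ASC V) (σ : Finset V)
    (m : ℤ) :
    (K.pureSkel m).link σ = (K.link σ).pureSkel (m - dimF σ - 1) := by
  rw [ASC.pureSkel, ASC.link_gen, ASC.pureSkel]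
  refine ASC.gen_congr _ fun t ⟨htσ, _⟩ => ?_
  replace htσ : Disjoint t σ := Finset.disjoint_iff_inter_eq_empty.mpr htσ
  simp only [Set.mem_ofPred_eq, htσ, true_and, dimF_union_of_disjoint htσ]
  omega

theorem serre_stmt_11 (V : Type) [DecidableEq V] (K : ASC V) (σ : Finset V)
    (hσ : σ ∈ K.faces) (m : ℤ) (hm : dimF σ + 1 ≤ m) :
    (K.pureSkel m).link σ = (K.link σ).pureSkel (m - dimF σ - 1) :=
  serre_stmt_11_general V K σ m

end
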